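/- arXiv:2605.14616 — 4 statements merged into one kernel-verified Lean document; each statement's English description precedes it below -/
import Mathlib

section
/- Let α ∈ ℝ with −1 < α < 0. Then: (i) for every multi-index β there exist a, b, c ∈ ℕ such that |β| = (α+1)a + b − αc + α; (ii) for every r ∈ ℝ the set of multi-indices {β : |β| ≤ r} is finite, so in particular every bounded interval of ℝ contains only finitely many values of the homogeneity; (iii) |β| ≥ α for every multi-index β, and |β| = α if and only if β = 0. -/
/-- Multi-indices: finitely supported functions from `{g} ⊔ ℕ⁴` to `ℕ`. -/
abbrev MIdx : Type := (Unit ⊕ (Fin 4 → ℕ)) →₀ ℕ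

/-- Parabolic degree of an element of `ℕ⁴`: `|n| = 2n₀ + n₁ + n₂ + n₃`. -/
def pdeg (n : Fin 4 → ℕ) : ℕ := 2 * n 0 + n 1 + n 2 + n 3

/-- The homogeneity `|β| = (α+1)β(g) + Σ_{n∈ℕ⁴} β(n)(|n| − α) + α` of a multi-index. -/
noncomputable def homog (α : ℝ) (β : MIdx) : ℝ :=
  (α + 1) * (β (Sum.inl ()) : ℝ) +
    (β.sum fun k m =>
      match k with
      | Sum.inl _ => (0 : ℝ)
      | Sum.inr n => (m : ℝ) * ((pdeg n : ℝ) - α)) + α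

/-!
Subtracting `α`, the homogeneity becomes the weighted count `∑ₖ β(k) w(k)` with weights
`w(g) = α + 1` and `w(n) = |n| - α`. For `-1 < α < 0` all weights are positive, and only finitely
many of them lie below any bound, since `w(n) ≥ |n|`. A multi-index of weighted count at most `r`
is then supported on the finitely many `k` with `w(k) ≤ r` and has entries at most `r / w(k)`,
which leaves finitely many candidates; positivity also gives `|β| ≥ α` with equality only at
`β = 0`. Splitting `w(n) = |n| - α` gives the form `(α + 1)a + b - αc + α`.
-/

open Finsupp

namespace Finsupp

variable {σ M : Type*} [AddCommMonoid M] [PartialOrder M] [IsOrderedAddMonoid M] {w : σ → M}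

theorem weight_nonneg (hw : ∀ s, 0 ≤ w s) (f : σ →₀ ℕ) : 0 ≤ weight w f :=
  sum_nonneg' fun s => nsmul_nonneg (hw s) (f s)

theorem smul_le_weight (hw : ∀ s, 0 ≤ w s) (f : σ →₀ ℕ) (s : σ) : f s • w s ≤ weight w f := by
  by_cases hs : f s = 0
  · simpa only [hs, zero_nsmul] using weight_nonneg hw f
  · exact Finset.single_le_sum (f := fun s => f s • w s) (fun s _ => nsmul_nonneg (hw s) (f s))
      (mem_support_iff.mpr hs)

theorem weight_eq_zero_iff (hw : ∀ s, 0 < w s) {f : σ →₀ ℕ} : weight w f = 0 ↔ f = 0 := by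
  refine ⟨fun hf => ext fun s => ?_, fun hf => hf ▸ map_zero _⟩
  by_contra hs
  exact (hw s).not_ge (hf ▸ le_weight_of_ne_zero (fun s => (hw s).le) hs)

theorem finite_setOf_weight_le {w : σ → ℝ} (hw : ∀ s, 0 < w s)
    (hfin : ∀ r, {s | w s ≤ r}.Finite) (r : ℝ) : {f : σ →₀ ℕ | weight w f ≤ r}.Finite := by
  classical
  refine ((hfin r).toFinset.finsupp fun s => Finset.range (⌊r / w s⌋₊ + 1)).finite_toSet.subset ?_
  intro f hf
  have hterm (s : σ) : (f s : ℝ) * w s ≤ r := by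
    simpa using (smul_le_weight (fun s => (hw s).le) f s).trans hf
  refine Finset.mem_finsupp_iff.mpr ⟨fun s hs => ?_, fun s _ => ?_⟩
  · simpa using (le_weight_of_ne_zero (fun s => (hw s).le) (mem_support_iff.mp hs)).trans hf
  · exact Finset.mem_range_succ_iff.mpr (Nat.le_floor ((le_div_iff₀ (hw s)).mpr (hterm s)))

end Finsupp

theorem le_pdeg (n : Fin 4 → ℕ) (i : Fin 4) : n i ≤ pdeg n := by
  fin_cases i <;> simp [pdeg] <;> omega

theorem finite_setOf_pdeg_le (N : ℕ) : {n | pdeg n ≤ N}.Finite :=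
  (Set.finite_Iic fun _ => N).subset fun n hn i => (le_pdeg n i).trans hn

noncomputable def homogWeight (α : ℝ) : Unit ⊕ (Fin 4 → ℕ) → ℝ :=
  Sum.elim (fun _ => α + 1) (fun n => pdeg n - α)

theorem homogWeight_pos {α : ℝ} (hα₁ : -1 < α) (hα₂ : α < 0) (k : Unit ⊕ (Fin 4 → ℕ)) :
    0 < homogWeight α k := by
  cases k with
  | inl => simp only [homogWeight, Sum.elim_inl]; linarith
  | inr n => simp only [homogWeight, Sum.elim_inr]; linarith [(pdeg n).cast_nonneg (α := ℝ)]

theorem finite_setOf_homogWeight_le (α r : ℝ) : {k | homogWeight α k ≤ r}.Finite := by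
  refine ((finite_setOf_pdeg_le ⌊r + α⌋₊).image Sum.inr |>.insert (Sum.inl ())).subset ?_
  rintro (⟨⟩ | n) hn
  · exact Set.mem_insert _ _
  · simp only [Set.mem_ofPred_eq, homogWeight, Sum.elim_inr] at hn
    have hdeg : (pdeg n : ℝ) ≤ r + α := by linarith
    exact Set.mem_insert_of_mem _ ⟨n, Nat.le_floor hdeg, rfl⟩

theorem homog_eq (α : ℝ) (β : MIdx) :
    homog α β = (α + 1) * β (Sum.inl ()) + (weight (Sum.elim 0 pdeg) β : ℕ)
      - α * (weight (Sum.elim 0 1) β : ℕ) + α := by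
  simp only [homog, weight_apply, Finsupp.sum, smul_eq_mul]
  push_cast
  rw [add_sub_assoc, Finset.mul_sum, ← Finset.sum_sub_distrib]
  congr 2
  refine Finset.sum_congr rfl fun k _ => ?_
  cases k with
  | inl => simp
  | inr n =>
    simp only [Sum.elim_inr, Pi.one_apply, Nat.cast_one, mul_one]
    ring

theorem homog_eq_weight_add (α : ℝ) (β : MIdx) :
    homog α β = weight (homogWeight α) β + α := by
  rw [homog_eq, ← weight_single_one_apply (Sum.inl ()) β]
  simp only [weight_apply, Finsupp.sum, smul_eq_mul, nsmul_eq_mul]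
  push_cast
  rw [Finset.mul_sum, Finset.mul_sum, ← Finset.sum_add_distrib, ← Finset.sum_sub_distrib]
  congr 1
  refine Finset.sum_congr rfl fun k _ => ?_
  cases k with
  | inl => simp [homogWeight, mul_comm]
  | inr n =>
    simp only [Pi.single_apply, reduceCtorEq, if_false, Nat.cast_zero, homogWeight, Sum.elim_inr,
      Pi.one_apply, Nat.cast_one]
    ring

theorem homogeneity_structure (α : ℝ) (hα₁ : -1 < α) (hα₂ : α < 0) :
    (∀ β : MIdx, ∃ a b c : ℕ,
        homog α β = (α + 1) * (a : ℝ) + (b : ℝ) - α * (c : ℝ) + α) ∧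
    (∀ r : ℝ, {β : MIdx | homog α β ≤ r}.Finite) ∧
    (∀ a b : ℝ, {t : ℝ | (∃ β : MIdx, homog α β = t) ∧ a < t ∧ t < b}.Finite) ∧
    (∀ β : MIdx, α ≤ homog α β) ∧
    (∀ β : MIdx, homog α β = α ↔ β = 0) := by
  have hpos := homogWeight_pos hα₁ hα₂
  have hfin (r : ℝ) : {β : MIdx | homog α β ≤ r}.Finite := by
    simpa only [homog_eq_weight_add, ← le_sub_iff_add_le] using
      finite_setOf_weight_le hpos (finite_setOf_homogWeight_le α) (r - α)
  refine ⟨fun β => ⟨_, _, _, homog_eq α β⟩, hfin, fun a b => ?_, fun β => ?_, fun β => ?_⟩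
  · refine ((hfin b).image (homog α)).subset ?_
    rintro t ⟨⟨β, rfl⟩, -, htb⟩
    exact ⟨β, htb.le, rfl⟩
  · rw [homog_eq_weight_add]
    linarith [weight_nonneg (fun k => (hpos k).le) β]
  · rw [homog_eq_weight_add, add_eq_right, weight_eq_zero_iff hpos]
end

section
/- Let E be a finite-dimensional real normed vector space, λ̄ > 0, 1 < p < ∞ and a ∈ ℝ. Let f : (0, λ̄] → E be continuously differentiable and assume that sup_{0<t≤λ̄} t^{−a+1/p} ‖f(t)‖ < ∞. Then there is a constant C, depending only on a, p and λ̄, such that sup_{0<t≤λ̄} ‖t^{−a+1/p} f(t)‖^p ≤ C ∫₀^{λ̄} ( ‖t^{−a} f(t)‖^p + ‖t^{−a+1} f'(t)‖^p ) dt. -/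
/-! Fix `t` and put `g u = u ^ (-a + 1 / p) • f u`. On `[t / 2, t]` the weights `u ^ (-a)` and
`u ^ (-a + 1)` are comparable to their values at `t`, so it suffices to prove the scale-invariant
one-dimensional Sobolev inequality
`‖g t‖ ^ p ≤ 2 ^ (p - 1) * ∫ u in t/2..t, ((t / 2)⁻¹ * ‖g u‖ ^ p + (t / 2) ^ (p - 1) * ‖g' u‖ ^ p)`.
It comes from comparing `g t` with `g y` at a point `y` where `‖g‖ ^ p` equals its mean, the
difference being at most `∫ ‖g'‖`, which Jensen's inequality bounds by the `L^p` norm of `g'`.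
Finally the integral over `[t / 2, t]` is at most the one over `(0, λ̄]`. -/

open MeasureTheory Set

theorem Real.rpow_add_le_mul_rpow_add_rpow {x y p : ℝ} (hx : 0 ≤ x) (hy : 0 ≤ y) (hp : 1 ≤ p) :
    (x + y) ^ p ≤ 2 ^ (p - 1) * (x ^ p + y ^ p) := by
  lift x to NNReal using hx
  lift y to NNReal using hy
  exact_mod_cast NNReal.rpow_add_le_mul_rpow_add_rpow x y hp

theorem rpow_intervalIntegral_le_mul_intervalIntegral_rpow {h : ℝ → ℝ} {a b p : ℝ} (hab : a < b)
    (hp : 1 ≤ p) (hh : ContinuousOn h (Icc a b)) (h0 : ∀ x ∈ Icc a b, 0 ≤ h x) :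
    (∫ x in a..b, h x) ^ p ≤ (b - a) ^ (p - 1) * ∫ x in a..b, h x ^ p := by
  have hp0 : 0 ≤ p := zero_le_one.trans hp
  have hrpow : ContinuousOn (fun x : ℝ => x ^ p) (Ici 0) :=
    continuousOn_id.rpow_const fun _ _ => Or.inr hp0
  have jensen := (convexOn_rpow hp).map_set_average_le hrpow isClosed_Ici
    (μ := volume) (t := Ioc a b) (by simp [hab]) (by simp)
    ((ae_restrict_iff' measurableSet_Ioc).2 (.of_forall fun x hx => h0 x (Ioc_subset_Icc_self hx)))
    (hh.integrableOn_Icc.mono_set Ioc_subset_Icc_self)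
    (((hrpow.comp hh fun x hx => h0 x hx).integrableOn_Icc).mono_set Ioc_subset_Icc_self)
  simp only [setAverage_eq, Real.volume_real_Ioc_of_le hab.le, smul_eq_mul,
    ← intervalIntegral.integral_of_le hab.le] at jensen
  have hba : 0 < b - a := sub_pos.2 hab
  rw [Real.mul_rpow (inv_nonneg.2 hba.le) (intervalIntegral.integral_nonneg hab.le h0),
    Real.inv_rpow hba.le, inv_mul_le_iff₀ (by positivity), ← mul_assoc] at jensen
  rwa [Real.rpow_sub_one hba.ne', div_eq_mul_inv]

section

variable {E : Type*} [NormedAddCommGroup E] [NormedSpace ℝ E]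

theorem norm_sub_le_integral_norm_deriv {g g' : ℝ → E} {a b : ℝ} (hgc : ContinuousOn g (Icc a b))
    (hg : ∀ x ∈ Ioo a b, HasDerivAt g (g' x) x)
    (hg'i : IntervalIntegrable (fun x => ‖g' x‖) volume a b) {x y : ℝ}
    (hx : x ∈ Icc a b) (hy : y ∈ Icc a b) :
    ‖g x - g y‖ ≤ ∫ u in a..b, ‖g' u‖ := by
  wlog hyx : y ≤ x generalizing x y
  · rw [norm_sub_rev]
    exact this hy hx (le_of_not_ge hyx)
  have hsub : Icc y x ⊆ Icc a b := Icc_subset_Icc hy.1 hx.2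
  calc ‖g x - g y‖ ≤ ∫ u in y..x, ‖g' u‖ := by
        refine norm_sub_le_integral_of_norm_deriv_le_of_le hyx (hgc.mono hsub)
          (fun u hu => (hg u (Ioo_subset_Ioo hy.1 hx.2 hu)).differentiableAt.differentiableWithinAt)
          (.of_forall fun u hu => (hg u (Ioo_subset_Ioo hy.1 hx.2 hu)).deriv ▸ le_rfl)
          (hg'i.mono_set ?_)
        rw [uIcc_of_le hyx, uIcc_of_le (hy.1.trans hy.2)]
        exact hsub
    _ ≤ ∫ u in a..b, ‖g' u‖ :=
        intervalIntegral.integral_mono_interval hy.1 hyx hx.2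
          (.of_forall fun _ => norm_nonneg _) hg'i

theorem norm_rpow_le_integral_norm_rpow_add_deriv {g g' : ℝ → E} {a b p : ℝ} (hab : a < b)
    (hp : 1 ≤ p) (hgc : ContinuousOn g (Icc a b)) (hg : ∀ x ∈ Ioo a b, HasDerivAt g (g' x) x)
    (hg'c : ContinuousOn g' (Icc a b)) {x : ℝ} (hx : x ∈ Icc a b) :
    ‖g x‖ ^ p ≤
      2 ^ (p - 1) * ∫ u in a..b, ((b - a)⁻¹ * ‖g u‖ ^ p + (b - a) ^ (p - 1) * ‖g' u‖ ^ p) := by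
  have hp0 : 0 ≤ p := zero_le_one.trans hp
  have hgp : ContinuousOn (fun u => ‖g u‖ ^ p) (Icc a b) :=
    hgc.norm.rpow_const fun _ _ => Or.inr hp0
  have hg'p : ContinuousOn (fun u => ‖g' u‖ ^ p) (Icc a b) :=
    hg'c.norm.rpow_const fun _ _ => Or.inr hp0
  obtain ⟨y, hy, hy_avg⟩ := exists_eq_interval_average hab.ne (f := fun u => ‖g u‖ ^ p)
    (by rwa [uIcc_of_le hab.le])
  rw [interval_average_eq_div] at hy_avg
  have hyI : y ∈ Icc a b := by
    rw [uIoo_of_le hab.le] at hy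
    exact Ioo_subset_Icc_self hy
  set I := ∫ u in a..b, ‖g' u‖
  have hI : 0 ≤ I := intervalIntegral.integral_nonneg hab.le fun _ _ => norm_nonneg _
  calc ‖g x‖ ^ p ≤ (‖g y‖ + I) ^ p := by
        refine Real.rpow_le_rpow (norm_nonneg _) ((norm_le_norm_add_norm_sub' _ (g y)).trans ?_) hp0
        gcongr
        exact norm_sub_le_integral_norm_deriv hgc hg
          (hg'c.norm.intervalIntegrable_of_Icc hab.le) hx hyI
    _ ≤ 2 ^ (p - 1) * (‖g y‖ ^ p + I ^ p) :=
        Real.rpow_add_le_mul_rpow_add_rpow (norm_nonneg _) hI hp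
    _ ≤ 2 ^ (p - 1) * ((b - a)⁻¹ * (∫ u in a..b, ‖g u‖ ^ p) +
          (b - a) ^ (p - 1) * ∫ u in a..b, ‖g' u‖ ^ p) := by
        rw [hy_avg, div_eq_inv_mul]
        gcongr
        exact rpow_intervalIntegral_le_mul_intervalIntegral_rpow hab hp hg'c.norm
          fun _ _ => norm_nonneg _
    _ = _ := by
        rw [intervalIntegral.integral_add, intervalIntegral.integral_const_mul,
          intervalIntegral.integral_const_mul]
        · exact (hgp.intervalIntegrable_of_Icc hab.le).const_mul _
        · exact (hg'p.intervalIntegrable_of_Icc hab.le).const_mul _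

theorem rpow_add_inv_mul_rpow {u b p N : ℝ} (hu : 0 < u) (hp : p ≠ 0) (hN : 0 ≤ N) :
    (u ^ (b + 1 / p) * N) ^ p = u * (u ^ b * N) ^ p := by
  rw [Real.mul_rpow (by positivity) hN, Real.mul_rpow (by positivity) hN, ← Real.rpow_mul hu.le,
    ← Real.rpow_mul hu.le, add_mul, one_div_mul_cancel hp, Real.rpow_add hu, Real.rpow_one]
  ring

theorem rpow_sub_one_mul_rpow_inv_sub_one_mul_rpow_le {r u z p : ℝ} (hr : 0 < r) (hru : r ≤ u)
    (hz : 0 ≤ z) (hp : 1 ≤ p) : r ^ (p - 1) * (u ^ (1 / p - 1) * z) ^ p ≤ z ^ p := by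
  have hu : 0 < u := hr.trans_le hru
  have hexp : (1 / p - 1) * p = -(p - 1) := by field_simp; ring
  rw [Real.mul_rpow (by positivity) hz, ← Real.rpow_mul hu.le, hexp, Real.rpow_neg hu.le,
    ← mul_assoc, ← div_eq_mul_inv]
  calc r ^ (p - 1) / u ^ (p - 1) * z ^ p ≤ 1 * z ^ p := by
        gcongr
        exact div_le_one_of_le₀ (Real.rpow_le_rpow hr.le hru (by linarith)) (by positivity)
    _ = z ^ p := one_mul _

theorem norm_rpow_smul_add_deriv_le {u b q : ℝ} (hu : 0 < u) (v v' : E) :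
    ‖u ^ (b + q) • v' + ((b + q) * u ^ (b + q - 1)) • v‖ ≤
      u ^ (q - 1) * (|b + q| * (u ^ b * ‖v‖) + u ^ (b + 1) * ‖v'‖) := by
  have h1 : u ^ (b + q) = u ^ (q - 1) * u ^ (b + 1) := by
    rw [← Real.rpow_add hu]; ring_nf
  have h2 : u ^ (b + q - 1) = u ^ (q - 1) * u ^ b := by
    rw [← Real.rpow_add hu]; ring_nf
  refine (norm_add_le _ _).trans_eq ?_
  have hu1 : 0 ≤ u ^ (q - 1) := by positivity
  rw [norm_smul, norm_smul, norm_mul, h1, h2, Real.norm_eq_abs (b + q),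
    Real.norm_of_nonneg (mul_nonneg hu1 (by positivity)),
    Real.norm_of_nonneg (mul_nonneg hu1 (by positivity))]
  ring

theorem weighted_norm_rpow_add_deriv_le {r u p b : ℝ} (v v' : E) (hr : 0 < r) (hru : r ≤ u)
    (hur : u ≤ 2 * r) (hp : 1 ≤ p) :
    r⁻¹ * ‖u ^ (b + 1 / p) • v‖ ^ p +
        r ^ (p - 1) * ‖u ^ (b + 1 / p) • v' + ((b + 1 / p) * u ^ (b + 1 / p - 1)) • v‖ ^ p ≤
      (2 + 2 ^ (p - 1) * (1 + |b + 1 / p| ^ p)) *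
        ((u ^ b * ‖v‖) ^ p + (u ^ (b + 1) * ‖v'‖) ^ p) := by
  have hu : 0 < u := hr.trans_le hru
  set c := b + 1 / p
  set X := u ^ b * ‖v‖
  set Y := u ^ (b + 1) * ‖v'‖
  have hX : 0 ≤ X := by positivity
  have hY : 0 ≤ Y := by positivity
  have hXp : 0 ≤ X ^ p := by positivity
  have hYp : 0 ≤ Y ^ p := by positivity
  have hvalue : r⁻¹ * ‖u ^ c • v‖ ^ p ≤ 2 * X ^ p := by
    rw [norm_smul, Real.norm_of_nonneg (by positivity),
      rpow_add_inv_mul_rpow hu (by positivity) (norm_nonneg v), ← mul_assoc]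
    gcongr
    rw [inv_mul_le_iff₀ hr]
    linarith
  have hderiv : r ^ (p - 1) * ‖u ^ c • v' + (c * u ^ (c - 1)) • v‖ ^ p ≤
      2 ^ (p - 1) * (1 + |c| ^ p) * (X ^ p + Y ^ p) :=
    calc r ^ (p - 1) * ‖u ^ c • v' + (c * u ^ (c - 1)) • v‖ ^ p
        ≤ r ^ (p - 1) * (u ^ (1 / p - 1) * (|c| * X + Y)) ^ p := by
          gcongr
          exact norm_rpow_smul_add_deriv_le hu v v'
      _ ≤ (|c| * X + Y) ^ p :=
          rpow_sub_one_mul_rpow_inv_sub_one_mul_rpow_le hr hru (by positivity) hp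
      _ ≤ 2 ^ (p - 1) * ((|c| * X) ^ p + Y ^ p) :=
          Real.rpow_add_le_mul_rpow_add_rpow (by positivity) hY hp
      _ ≤ 2 ^ (p - 1) * (1 + |c| ^ p) * (X ^ p + Y ^ p) := by
          rw [Real.mul_rpow (abs_nonneg c) hX, mul_assoc]
          gcongr
          nlinarith [Real.rpow_nonneg (abs_nonneg c) p]
  linarith

theorem weighted_norm_rpow_le_integral_half {f f' : ℝ → E} {t p b : ℝ} (ht : 0 < t) (hp : 1 ≤ p)
    (hfc : ContinuousOn f (Icc (t / 2) t)) (hf : ∀ u ∈ Ioo (t / 2) t, HasDerivAt f (f' u) u)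
    (hf'c : ContinuousOn f' (Icc (t / 2) t)) :
    (t ^ (b + 1 / p) * ‖f t‖) ^ p ≤
      2 ^ (p - 1) * (2 + 2 ^ (p - 1) * (1 + |b + 1 / p| ^ p)) *
        ∫ u in t / 2..t, ((u ^ b * ‖f u‖) ^ p + (u ^ (b + 1) * ‖f' u‖) ^ p) := by
  set c := b + 1 / p
  set g : ℝ → E := fun u => u ^ c • f u
  set g' : ℝ → E := fun u => u ^ c • f' u + (c * u ^ (c - 1)) • f u
  have hp0 : 0 ≤ p := zero_le_one.trans hp
  have ht2 : 0 < t / 2 := half_pos ht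
  have ht2t : t / 2 ≤ t := half_le_self ht.le
  have hrpow (e : ℝ) : ContinuousOn (fun u : ℝ => u ^ e) (Icc (t / 2) t) :=
    continuousOn_id.rpow_const fun u hu => Or.inl (ht2.trans_le hu.1).ne'
  have hgc : ContinuousOn g (Icc (t / 2) t) := (hrpow c).smul hfc
  have hg'c : ContinuousOn g' (Icc (t / 2) t) :=
    ((hrpow c).smul hf'c).add ((continuousOn_const.mul (hrpow (c - 1))).smul hfc)
  have hg (u : ℝ) (hu : u ∈ Ioo (t / 2) t) : HasDerivAt g (g' u) u :=
    (Real.hasDerivAt_rpow_const (Or.inl (ht2.trans hu.1).ne')).smul (hf u hu)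
  have hGc : ContinuousOn (fun u => (u ^ b * ‖f u‖) ^ p + (u ^ (b + 1) * ‖f' u‖) ^ p)
      (Icc (t / 2) t) :=
    (((hrpow _).mul hfc.norm).rpow_const fun _ _ => Or.inr hp0).add
      (((hrpow _).mul hf'c.norm).rpow_const fun _ _ => Or.inr hp0)
  have hsob := norm_rpow_le_integral_norm_rpow_add_deriv (half_lt_self ht) hp hgc hg hg'c
    (right_mem_Icc.2 ht2t)
  rw [show t - t / 2 = t / 2 by ring] at hsob
  calc (t ^ c * ‖f t‖) ^ p = ‖g t‖ ^ p := by
        rw [norm_smul, Real.norm_of_nonneg (Real.rpow_nonneg ht.le c)]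
    _ ≤ 2 ^ (p - 1) * ∫ u in t / 2..t,
          (2 + 2 ^ (p - 1) * (1 + |c| ^ p)) *
            ((u ^ b * ‖f u‖) ^ p + (u ^ (b + 1) * ‖f' u‖) ^ p) := by
        refine hsob.trans (mul_le_mul_of_nonneg_left ?_ (by positivity))
        refine intervalIntegral.integral_mono_on ht2t ?_
          ((hGc.intervalIntegrable_of_Icc ht2t).const_mul _) fun u hu =>
            weighted_norm_rpow_add_deriv_le (f u) (f' u) ht2 hu.1 (by linarith [hu.2]) hp
        refine ContinuousOn.intervalIntegrable_of_Icc ht2t ?_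
        exact (continuousOn_const.mul (hgc.norm.rpow_const fun _ _ => Or.inr hp0)).add
          (continuousOn_const.mul (hg'c.norm.rpow_const fun _ _ => Or.inr hp0))
    _ = _ := by rw [intervalIntegral.integral_const_mul, mul_assoc]

end

theorem ofReal_setIntegral_le_setLIntegral {α : Type*} [MeasurableSpace α] {μ : Measure α}
    {G : α → ℝ} {s t : Set α} (ht : MeasurableSet t) (hG : ∀ x ∈ t, 0 ≤ G x) (hts : t ⊆ s) :
    ENNReal.ofReal (∫ x in t, G x ∂μ) ≤ ∫⁻ x in s, ENNReal.ofReal (G x) ∂μ := by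
  by_cases hGi : IntegrableOn G t μ
  · rw [ofReal_integral_eq_lintegral_ofReal hGi ((ae_restrict_iff' ht).2 (.of_forall hG))]
    exact lintegral_mono_set hts
  · rw [integral_undef hGi, ENNReal.ofReal_zero]
    exact zero_le

theorem weighted_sup_integral_inequality_general
    {E : Type*} [NormedAddCommGroup E] [NormedSpace ℝ E]
    (lam : ℝ) (p a : ℝ) (hp : 1 < p) :
    ∃ C : ℝ, 0 < C ∧
      ∀ (f f' : ℝ → E),
        (∀ t ∈ Ioc (0 : ℝ) lam, HasDerivWithinAt f (f' t) (Ioc (0 : ℝ) lam) t) →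
        ContinuousOn f' (Ioc (0 : ℝ) lam) →
        (∃ M : ℝ, ∀ t ∈ Ioc (0 : ℝ) lam, t ^ (-a + 1 / p) * ‖f t‖ ≤ M) →
        ∀ t ∈ Ioc (0 : ℝ) lam,
          ENNReal.ofReal ((t ^ (-a + 1 / p) * ‖f t‖) ^ p) ≤
            ENNReal.ofReal C *
              ∫⁻ s in Ioc (0 : ℝ) lam,
                ENNReal.ofReal ((s ^ (-a) * ‖f s‖) ^ p + (s ^ (-a + 1) * ‖f' s‖) ^ p) := by
  refine ⟨2 ^ (p - 1) * (2 + 2 ^ (p - 1) * (1 + |-a + 1 / p| ^ p)), by positivity,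
    fun f f' hf hf'c _ t ht => ?_⟩
  have hsub : Icc (t / 2) t ⊆ Ioc 0 lam := fun u hu =>
    ⟨(half_pos ht.1).trans_le hu.1, hu.2.trans ht.2⟩
  have hreal := weighted_norm_rpow_le_integral_half (b := -a) ht.1 hp.le
    (fun u hu => (hf u (hsub hu)).continuousWithinAt.mono hsub)
    (fun u hu => (hf u (hsub (Ioo_subset_Icc_self hu))).hasDerivAt
      (Ioc_mem_nhds ((half_pos ht.1).trans hu.1) (hu.2.trans_le ht.2)))
    (hf'c.mono hsub)
  refine (ENNReal.ofReal_le_ofReal hreal).trans ?_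
  rw [ENNReal.ofReal_mul (by positivity)]
  gcongr
  rw [intervalIntegral.integral_of_le (half_le_self ht.1.le)]
  refine ofReal_setIntegral_le_setLIntegral measurableSet_Ioc (fun u hu => ?_)
    (Ioc_subset_Icc_self.trans hsub)
  have : 0 < u := (half_pos ht.1).trans hu.1
  positivity

theorem weighted_sup_integral_inequality
    {E : Type*} [NormedAddCommGroup E] [NormedSpace ℝ E] [FiniteDimensional ℝ E]
    (lam : ℝ) (hlam : 0 < lam) (p a : ℝ) (hp : 1 < p) :
    ∃ C : ℝ, 0 < C ∧
      ∀ (f f' : ℝ → E),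
        (∀ t ∈ Ioc (0 : ℝ) lam, HasDerivWithinAt f (f' t) (Ioc (0 : ℝ) lam) t) →
        ContinuousOn f' (Ioc (0 : ℝ) lam) →
        (∃ M : ℝ, ∀ t ∈ Ioc (0 : ℝ) lam, t ^ (-a + 1 / p) * ‖f t‖ ≤ M) →
        ∀ t ∈ Ioc (0 : ℝ) lam,
          ENNReal.ofReal ((t ^ (-a + 1 / p) * ‖f t‖) ^ p) ≤
            ENNReal.ofReal C *
              ∫⁻ s in Ioc (0 : ℝ) lam,
                ENNReal.ofReal ((s ^ (-a) * ‖f s‖) ^ p + (s ^ (-a + 1) * ‖f' s‖) ^ p) :=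
  weighted_sup_integral_inequality_general lam p a hp
end

section
/- Let α ∈ ℝ with −1 < α < 0 and set d := 5. Let p ≥ 1 and l ∈ ℕ satisfy l ≥ p − 1, and suppose that p > 1 or l > 0. Let β₁, …, β_p be nonzero multi-indices with [β_i] ≥ −1 for all i, and set β := β₁ + ⋯ + β_p + l·δ_g. Then for every k ∈ {1, …, p}: [β_k] ≤ [β] and |β_k|_≺ < |β|_≺. -/
/-- `[β] = β(g) − Σ_{n∈ℕ⁴} β(n)`. -/
def brk (β : MIdx) : ℤ :=
  (β (Sum.inl ()) : ℤ) -
    (β.sum fun k m =>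
      match k with
      | Sum.inl _ => (0 : ℤ)
      | Sum.inr _ => (m : ℤ))

/-- The modified homogeneity `|β|_≺ = |β| + (d/2)([β] + 1)` with `d = 5`. -/
noncomputable def homP (α : ℝ) (β : MIdx) : ℝ :=
  homog α β + (5 / 2 : ℝ) * ((brk β : ℝ) + 1)

/-- The multi-index `δ_g`. -/
noncomputable def deltaG : MIdx := Finsupp.single (Sum.inl ()) 1

/-! Both `[·]` and `|·|_≺ − (α + 5/2)` are additive in the multi-index, and `[βᵢ] ≥ −1` bounds them
below on each `βᵢ` by `−1`, resp. `−(α + 5/2)`. In `β = Σ βᵢ + l δ_g` the `p − 1` summands `βᵢ`, `i ≠ k`,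
therefore cost at most `p − 1`, resp. `(p − 1)(α + 5/2)`, which the `l ≥ p − 1` copies of `δ_g`, worth
`1`, resp. `α + 7/2` each, pay for (strictly in the second case, as `l ≥ 1`). -/

lemma le_map_sum_add_mul_sub {M R : Type*} [AddCommMonoid M] [CommRing R] [LinearOrder R]
    [IsStrictOrderedRing R] (φ : M →+ R) {p l : ℕ} (hl : p - 1 ≤ l) (βs : Fin p → M) (δ : M)
    {c : R} (hc : 0 ≤ c) (hβ : ∀ j, -c ≤ φ (βs j)) (k : Fin p) :
    φ (βs k) + l * (φ δ - c) ≤ φ ((∑ j, βs j) + l • δ) := by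
  have hsum : φ ((∑ j, βs j) + l • δ)
      = φ (βs k) + ∑ j ∈ Finset.univ.erase k, φ (βs j) + l * φ δ := by
    rw [map_add, map_sum, map_nsmul, nsmul_eq_mul, ← Finset.add_sum_erase _ _ (Finset.mem_univ k)]
  have hrest : ((p - 1 : ℕ) : R) * -c ≤ ∑ j ∈ Finset.univ.erase k, φ (βs j) := by
    simpa [Finset.card_erase_of_mem] using
      Finset.card_nsmul_le_sum (Finset.univ.erase k) (fun j => φ (βs j)) (-c) (fun j _ => hβ j)
  have hcost : ((p - 1 : ℕ) : R) * c ≤ l * c := mul_le_mul_of_nonneg_right (Nat.mono_cast hl) hc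
  rw [hsum]
  linarith

lemma sum_match_inr_add {S : Type*} [AddCommMonoid S] (f : (Fin 4 → ℕ) → ℕ → S)
    (hf0 : ∀ n, f n 0 = 0) (hfadd : ∀ n a b, f n (a + b) = f n a + f n b) (β₁ β₂ : MIdx) :
    ((β₁ + β₂).sum fun k m => match k with | Sum.inl _ => (0 : S) | Sum.inr n => f n m) =
      (β₁.sum fun k m => match k with | Sum.inl _ => (0 : S) | Sum.inr n => f n m) +
        (β₂.sum fun k m => match k with | Sum.inl _ => (0 : S) | Sum.inr n => f n m) :=
  Finsupp.sum_add_index' (fun k => by rcases k with _ | n <;> simp [hf0])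
    (fun k a b => by rcases k with _ | n <;> simp [hfadd])

lemma brk_add (β₁ β₂ : MIdx) : brk (β₁ + β₂) = brk β₁ + brk β₂ := by
  simp only [brk, Finsupp.add_apply,
    sum_match_inr_add (fun _ m => (m : ℤ)) (fun _ => rfl) (fun _ a b => Nat.cast_add a b)]
  push_cast
  ring

lemma homog_add (α : ℝ) (β₁ β₂ : MIdx) : homog α (β₁ + β₂) = homog α β₁ + homog α β₂ - α := by
  simp only [homog, Finsupp.add_apply,
    sum_match_inr_add (fun n m => (m : ℝ) * ((pdeg n : ℝ) - α)) (fun _ => by simp)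
      (fun _ a b => by push_cast; ring)]
  push_cast
  ring

def brkHom : MIdx →+ ℤ where
  toFun := brk
  map_zero' := by simp [brk]
  map_add' := brk_add

noncomputable def homPSubHom (α : ℝ) : MIdx →+ ℝ where
  toFun β := homP α β - (α + 5 / 2)
  map_zero' := by simp [homP, homog, brk]
  map_add' β₁ β₂ := by simp only [homP, homog_add, brk_add]; push_cast; ring

@[simp]
lemma homPSubHom_apply (α : ℝ) (β : MIdx) : homPSubHom α β = homP α β - (α + 5 / 2) := rfl

lemma le_homog (α : ℝ) (β : MIdx) :
    (β (Sum.inl ()) : ℝ) + α * brk β + α ≤ homog α β := by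
  induction β using Finsupp.induction_linear with
  | zero => simp [homog, brk]
  | add β₁ β₂ h₁ h₂ =>
    rw [homog_add, brk_add, Finsupp.add_apply]
    push_cast
    linarith
  | single k m =>
    rcases k with _ | n
    · simp only [homog, brk, Finsupp.single_eq_same, Finsupp.sum_single_index, sub_zero,
        Int.cast_natCast, add_zero, add_le_add_iff_right]
      linarith
    · simp only [homog, brk, ne_eq, reduceCtorEq, not_false_eq_true, Finsupp.single_eq_of_ne,
        CharP.cast_eq_zero, Finsupp.sum_single_index, zero_sub, Int.cast_neg, Int.cast_natCast,
        mul_neg, zero_add, mul_zero, zero_mul, add_le_add_iff_right]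
      have : (0 : ℝ) ≤ m * pdeg n := by positivity
      linarith

lemma homP_nonneg {α : ℝ} (hα : -5 / 2 ≤ α) {β : MIdx} (hβ : -1 ≤ brk β) : 0 ≤ homP α β := by
  have hβR : (-1 : ℝ) ≤ brk β := by exact_mod_cast hβ
  have hg : (0 : ℝ) ≤ β (Sum.inl ()) := Nat.cast_nonneg _
  have hc : 0 ≤ (α + 5 / 2) * ((brk β : ℝ) + 1) := mul_nonneg (by linarith) (by linarith)
  linarith [le_homog α β, show homP α β = homog α β + 5 / 2 * ((brk β : ℝ) + 1) from rfl]

lemma brk_deltaG : brk deltaG = 1 := by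
  simp [brk, deltaG]

lemma homP_deltaG (α : ℝ) : homP α deltaG = 2 * α + 6 := by
  simp only [homP, homog, deltaG, brk, Finsupp.single_eq_same, Finsupp.sum_single_index,
    Nat.cast_one, mul_one, add_zero, sub_zero, Int.cast_one]
  ring

theorem modified_homogeneity_strict_decrease_general (α : ℝ) (hα₁ : -1 < α)
    (p l : ℕ) (hl : (p : ℤ) - 1 ≤ (l : ℤ)) (hpl : 1 < p ∨ 0 < l)
    (βs : Fin p → MIdx) (hbrk : ∀ i, -1 ≤ brk (βs i)) :
    ∀ k : Fin p,
      brk (βs k) ≤ brk ((∑ j, βs j) + l • deltaG) ∧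
      homP α (βs k) < homP α ((∑ j, βs j) + l • deltaG) := by
  intro k
  have hl_nat : p - 1 ≤ l := by omega
  have hl_pos : (0 : ℝ) < l := by exact_mod_cast (by omega : 0 < l)
  constructor
  · have := le_map_sum_add_mul_sub brkHom hl_nat βs deltaG zero_le_one hbrk k
    simpa [brkHom, brk_deltaG] using this
  · have hshift : ∀ j, -(α + 5 / 2) ≤ homPSubHom α (βs j) := fun j => by
      rw [homPSubHom_apply]
      linarith [homP_nonneg (α := α) (by linarith) (hbrk j)]
    have := le_map_sum_add_mul_sub (homPSubHom α) hl_nat βs deltaG (by linarith) hshift k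
    simp only [homPSubHom_apply, homP_deltaG] at this
    linarith

theorem modified_homogeneity_strict_decrease (α : ℝ) (hα₁ : -1 < α) (hα₂ : α < 0)
    (p l : ℕ) (hp : 1 ≤ p) (hl : (p : ℤ) - 1 ≤ (l : ℤ)) (hpl : 1 < p ∨ 0 < l)
    (βs : Fin p → MIdx) (hne : ∀ i, βs i ≠ 0) (hbrk : ∀ i, -1 ≤ brk (βs i)) :
    ∀ k : Fin p,
      brk (βs k) ≤ brk ((∑ j, βs j) + l • deltaG) ∧
      homP α (βs k) < homP α ((∑ j, βs j) + l • deltaG) :=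
  modified_homogeneity_strict_decrease_general α hα₁ p l hl hpl βs hbrk
end

section
/- Let α = −1/2 − ε with ε ∈ (0, 1/2), and set d := 5. Then: (i) every multi-index β with [β] ≥ 0 satisfies |β|_≺ ≥ 2 − ε, with equality if and only if β = 0; (ii) for every N ∈ ℝ the set {β : [β] ≥ 0 and |β|_≺ < N} of multi-indices is finite. -/
noncomputable def qw : (Unit ⊕ (Fin 4 → ℕ)) → ℝ
  | Sum.inl _ => 0
  | Sum.inr n => (pdeg n : ℝ) + 1

def sw (β : MIdx) (k : Unit ⊕ (Fin 4 → ℕ)) : ℝ :=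
  match k with
  | Sum.inl _ => 0
  | Sum.inr _ => (β k : ℝ)

lemma hB (β : MIdx) : ((brk β : ℤ) : ℝ) =
    (β (Sum.inl ()) : ℝ) - ∑ k ∈ β.support, sw β k := by
  unfold brk
  rw [Finsupp.sum]
  push_cast
  congr 1
  refine Finset.sum_congr rfl fun k _ => ?_
  cases k <;> simp [sw]

lemma key (ε α : ℝ) (hα : α = -1/2 - ε) (β : MIdx) :
    homP α β = 2 - ε + (3 - ε) * ((brk β : ℝ)) +
      ∑ k ∈ β.support, (β k : ℝ) * qw k := by
  have h2 : (β.sum fun k m =>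
      match k with
      | Sum.inl _ => (0 : ℝ)
      | Sum.inr n => (m : ℝ) * ((pdeg n : ℝ) - α)) =
      ∑ k ∈ β.support, ((β k : ℝ) * qw k + (-α - 1) * sw β k) := by
    rw [Finsupp.sum]
    refine Finset.sum_congr rfl fun k _ => ?_
    cases k <;> simp [qw, sw] <;> ring
  unfold homP homog
  rw [h2, hB, Finset.sum_add_distrib, ← Finset.mul_sum]
  subst hα
  ring

lemma term_nonneg (β : MIdx) (k : Unit ⊕ (Fin 4 → ℕ)) : 0 ≤ (β k : ℝ) * qw k := by
  cases k <;> simp [qw] <;> positivity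

lemma sw_le_term (β : MIdx) (k : Unit ⊕ (Fin 4 → ℕ)) : sw β k ≤ (β k : ℝ) * qw k := by
  cases k with
  | inl _ => simp [sw, qw]
  | inr n =>
    simp only [sw, qw]
    nlinarith [Nat.cast_nonneg (α := ℝ) (pdeg n), Nat.cast_nonneg (α := ℝ) (β (Sum.inr n))]

theorem modified_homogeneity_min_and_finite (ε : ℝ) (hε₀ : 0 < ε) (hε₁ : ε < 1 / 2)
    (α : ℝ) (hα : α = -1/2 - ε) :
    (∀ β : MIdx, 0 ≤ brk β →
      2 - ε ≤ homP α β ∧ (homP α β = 2 - ε ↔ β = 0)) ∧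
    (∀ N : ℝ, {β : MIdx | 0 ≤ brk β ∧ homP α β < N}.Finite) := by
  constructor
  · intro β hb
    have hbr : (0 : ℝ) ≤ (brk β : ℝ) := by exact_mod_cast hb
    have hk := key ε α hα β
    have hQ : 0 ≤ ∑ k ∈ β.support, (β k : ℝ) * qw k :=
      Finset.sum_nonneg fun k _ => term_nonneg β k
    have h3ε : (0 : ℝ) < 3 - ε := by linarith
    constructor
    · rw [hk]; nlinarith [mul_nonneg h3ε.le hbr]
    · constructor
      · intro heq
        rw [hk] at heq
        have hz : (3 - ε) * (brk β : ℝ) + ∑ k ∈ β.support, (β k : ℝ) * qw k = 0 := by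
          linarith
        have hbr0 : (brk β : ℝ) = 0 := by nlinarith [mul_nonneg h3ε.le hbr]
        have hQ0 : ∑ k ∈ β.support, (β k : ℝ) * qw k = 0 := by
          nlinarith [mul_nonneg h3ε.le hbr]
        have hterm := (Finset.sum_eq_zero_iff_of_nonneg
          (fun k _ => term_nonneg β k)).mp hQ0
        have hsupp : ∀ k ∈ β.support, k = Sum.inl () := by
          intro k hkm
          cases k with
          | inl u => cases u; rfl
          | inr n =>
            exfalso
            have h1 : (β (Sum.inr n) : ℝ) * qw (Sum.inr n) = 0 := hterm _ hkm
            have h2 : β (Sum.inr n) ≠ 0 := Finsupp.mem_support_iff.mp hkm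
            have h3 : (0:ℝ) < (β (Sum.inr n) : ℝ) := by
              exact_mod_cast Nat.pos_of_ne_zero h2
            have h4 : (0:ℝ) < qw (Sum.inr n) := by
              simp only [qw]; positivity
            nlinarith
        have hS0 : ∑ k ∈ β.support, sw β k = 0 := by
          refine Finset.sum_eq_zero fun k hkm => ?_
          rw [hsupp k hkm]; rfl
        have ha : (β (Sum.inl ()) : ℝ) = 0 := by
          have := hB β
          rw [hbr0, hS0] at this
          linarith
        have ha' : β (Sum.inl ()) = 0 := by exact_mod_cast ha
        ext k
        cases k with
        | inl u => cases u; simpa using ha'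
        | inr n =>
          simp only [Finsupp.coe_zero, Pi.zero_apply]
          by_contra hne
          have : Sum.inr n ∈ β.support := Finsupp.mem_support_iff.mpr hne
          exact absurd (hsupp _ this) (by simp)
      · intro h
        subst h
        simp only [homP, homog, brk, Finsupp.coe_zero, Pi.zero_apply, Finsupp.sum_zero_index]
        push_cast
        rw [hα]; ring
  · intro N
    set M : ℕ := ⌈N⌉₊ with hM
    have hNM : N ≤ (M : ℝ) := Nat.le_ceil N
    -- finite candidate superset
    have hfin : {n : Fin 4 → ℕ | pdeg n ≤ M}.Finite := by
      apply (Set.finite_Iic (fun _ => M : Fin 4 → ℕ)).subset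
      intro n hn
      simp only [Set.mem_setOf_eq] at hn
      have h0 : n 0 ≤ M := by unfold pdeg at hn; omega
      have h1 : n 1 ≤ M := by unfold pdeg at hn; omega
      have h2 : n 2 ≤ M := by unfold pdeg at hn; omega
      have h3 : n 3 ≤ M := by unfold pdeg at hn; omega
      intro i
      fin_cases i
      exacts [h0, h1, h2, h3]
    classical
    set T : Finset (Unit ⊕ (Fin 4 → ℕ)) :=
      {Sum.inl ()} ∪ hfin.toFinset.image Sum.inr with hT
    set fF : (Unit ⊕ (Fin 4 → ℕ)) → ℕ := fun k =>
      match k with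
      | Sum.inl _ => 2 * M
      | Sum.inr n => if pdeg n ≤ M then M else 0 with hfF
    have hsupp : ∀ k, fF k ≠ 0 → k ∈ T := by
      intro k hk
      cases k with
      | inl u =>
        cases u; exact Finset.mem_union_left _ (Finset.mem_singleton_self _)
      | inr n =>
        apply Finset.mem_union_right
        simp only [hfF] at hk
        by_cases hp : pdeg n ≤ M
        · exact Finset.mem_image_of_mem _ (hfin.mem_toFinset.mpr hp)
        · simp [hp] at hk
    set F : MIdx := Finsupp.onFinset T fF hsupp with hF
    apply (Set.finite_Iic F).subset
    rintro β ⟨hb, hN⟩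
    have hbr : (0 : ℝ) ≤ (brk β : ℝ) := by exact_mod_cast hb
    have hk := key ε α hα β
    have hQn : ∀ k ∈ β.support, 0 ≤ (β k : ℝ) * qw k := fun k _ => term_nonneg β k
    have hQ : 0 ≤ ∑ k ∈ β.support, (β k : ℝ) * qw k := Finset.sum_nonneg hQn
    have h3ε : (1 : ℝ) ≤ 3 - ε := by linarith
    have hbrM : (brk β : ℝ) ≤ (M : ℝ) := by
      nlinarith [mul_nonneg (by linarith : (0:ℝ) ≤ 3 - ε) hbr]
    have hQM : ∑ k ∈ β.support, (β k : ℝ) * qw k ≤ (M : ℝ) := by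
      nlinarith [mul_nonneg (by linarith : (0:ℝ) ≤ 3 - ε) hbr]
    have hSQ : ∑ k ∈ β.support, sw β k ≤ ∑ k ∈ β.support, (β k : ℝ) * qw k :=
      Finset.sum_le_sum fun k _ => sw_le_term β k
    have hS0 : 0 ≤ ∑ k ∈ β.support, sw β k := by
      refine Finset.sum_nonneg fun k _ => ?_
      cases k <;> simp [sw] <;> positivity
    have haM : (β (Sum.inl ()) : ℝ) ≤ 2 * (M : ℝ) := by
      have := hB β
      nlinarith
    have haM' : β (Sum.inl ()) ≤ 2 * M := by exact_mod_cast haM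
    -- pointwise bound: β ≤ F
    rw [Set.mem_Iic, Finsupp.le_def]
    intro k
    cases k with
    | inl u =>
      cases u
      have : F (Sum.inl ()) = 2 * M := rfl
      rw [this]
      exact haM'
    | inr n =>
      by_cases hz : β (Sum.inr n) = 0
      · rw [hz]; exact Nat.zero_le _
      · have hmem : Sum.inr n ∈ β.support := Finsupp.mem_support_iff.mpr hz
        have hterm : (β (Sum.inr n) : ℝ) * qw (Sum.inr n) ≤ (M : ℝ) :=
          le_trans (Finset.single_le_sum hQn hmem) hQM
        have hb1 : (1 : ℝ) ≤ (β (Sum.inr n) : ℝ) := by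
          exact_mod_cast Nat.one_le_iff_ne_zero.mpr hz
        have hq1 : (1 : ℝ) ≤ qw (Sum.inr n) := by
          simp only [qw]
          have := Nat.cast_nonneg (α := ℝ) (pdeg n)
          linarith
        have hpM : (pdeg n : ℝ) ≤ (M : ℝ) := by
          have : qw (Sum.inr n) ≤ (M : ℝ) := by nlinarith
          simp only [qw] at this; linarith
        have hpM' : pdeg n ≤ M := by exact_mod_cast hpM
        have hβM : (β (Sum.inr n) : ℝ) ≤ (M : ℝ) := by nlinarith
        have hβM' : β (Sum.inr n) ≤ M := by exact_mod_cast hβM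
        have : F (Sum.inr n) = M := by
          show fF (Sum.inr n) = M
          simp [hfF, hpM']
        rw [this]
        exact hβM'
end
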